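/- arXiv:1808.02007 — 5 statements merged into one kernel-verified Lean document; each statement's English description precedes it below -/
import Mathlib

section
/- Let ν be a probability measure on ℝ with ∫ t² dν(t) = 3σ² for some σ > 0, and let μ₀ be the pushforward of the product measure ((Lebesgue measure restricted to the interval (0,1)) ⊗ ν) under the map (u,t) ↦ u·t. Then for every k > 0, μ₀({x ∈ ℝ : |x| ≥ k}) ≤ 4σ²/(9k²). -/
open MeasureTheory

/-- The Khinchine transform: the law of `U * ζ` where `U` is uniform on `(0,1)`,
independent of `ζ` with law `ν`.  By Khinchine's representation theorem, this is
the general form of a distribution unimodal about `0`. -/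
noncomputable def khinchine (ν : Measure ℝ) : Measure ℝ :=
  Measure.map (fun p : ℝ × ℝ => p.1 * p.2)
    ((volume.restrict (Set.Ioo (0 : ℝ) 1)).prod ν)

/-- **Gauss inequality.** If `ν` is a probability measure on `ℝ` with
`∫ t² dν = 3σ²` and `μ₀` is the Khinchine transform of `ν`, then for every `k > 0`,
`μ₀ {|x| ≥ k} ≤ 4σ²/(9k²)`. -/
theorem stmt0 (ν : Measure ℝ) [IsProbabilityMeasure ν] (σ : ℝ) (hσ : 0 < σ)
    (hmom : ∫ t, t ^ 2 ∂ν = 3 * σ ^ 2) (k : ℝ) (hk : 0 < k) :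
    khinchine ν {x : ℝ | k ≤ |x|} ≤ ENNReal.ofReal (4 * σ ^ 2 / (9 * k ^ 2)) := by
  have hm : Measurable (fun p : ℝ × ℝ => p.1 * p.2) :=
    measurable_fst.mul measurable_snd
  have hs : MeasurableSet {x : ℝ | k ≤ |x|} :=
    measurableSet_le measurable_const measurable_abs
  have hint : Integrable (fun t => t ^ 2) ν := by
    by_contra h
    rw [integral_undef h] at hmom
    nlinarith
  rw [khinchine, Measure.map_apply hm hs,
    Measure.prod_apply_symm (hm hs)]
  have key : ∀ t : ℝ,
      (volume.restrict (Set.Ioo (0:ℝ) 1)) ((fun u => (u, t)) ⁻¹' ((fun p : ℝ × ℝ => p.1 * p.2) ⁻¹' {x : ℝ | k ≤ |x|}))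
        ≤ ENNReal.ofReal (4 / (27 * k ^ 2) * t ^ 2) := by
    intro t
    have hpre : ((fun u => (u, t)) ⁻¹' ((fun p : ℝ × ℝ => p.1 * p.2) ⁻¹' {x : ℝ | k ≤ |x|}))
        = {u : ℝ | k ≤ |u * t|} := rfl
    have hms : MeasurableSet {u : ℝ | k ≤ |u * t|} :=
      measurableSet_le measurable_const (measurable_id.mul_const t).abs
    rw [hpre, Measure.restrict_apply hms]
    rcases le_or_gt |t| k with hle | hlt
    · have : {u : ℝ | k ≤ |u * t|} ∩ Set.Ioo 0 1 = ∅ := by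
        ext u
        simp only [Set.mem_inter_iff, Set.mem_setOf_eq, Set.mem_Ioo, Set.mem_empty_iff_false, iff_false]
        rintro ⟨h1, h2, h3⟩
        rw [abs_mul, abs_of_pos h2] at h1
        nlinarith [abs_nonneg t]
      rw [this]
      simp
    · have ht0 : (0:ℝ) < |t| := lt_trans hk hlt
      have hsub : {u : ℝ | k ≤ |u * t|} ∩ Set.Ioo 0 1 ⊆ Set.Icc (k / |t|) 1 := by
        rintro u ⟨h1, h2, h3⟩
        rw [Set.mem_setOf_eq, abs_mul, abs_of_pos h2] at h1
        constructor
        · rw [div_le_iff₀ ht0]; exact h1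
        · exact le_of_lt h3
      calc volume ({u : ℝ | k ≤ |u * t|} ∩ Set.Ioo 0 1)
          ≤ volume (Set.Icc (k / |t|) 1) := measure_mono hsub
        _ = ENNReal.ofReal (1 - k / |t|) := by rw [Real.volume_Icc]
        _ ≤ ENNReal.ofReal (4 / (27 * k ^ 2) * t ^ 2) := by
            apply ENNReal.ofReal_le_ofReal
            rw [← sq_abs t, sub_le_iff_le_add, div_mul_eq_mul_div,
              div_add_div _ _ (by positivity : (27 * k ^ 2 : ℝ) ≠ 0) (ne_of_gt ht0),
              le_div_iff₀ (by positivity)]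
            nlinarith [sq_nonneg (2 * |t| - 3 * k)]
    -- end
  calc ∫⁻ t, (volume.restrict (Set.Ioo (0:ℝ) 1)) ((fun u => (u, t)) ⁻¹' ((fun p : ℝ × ℝ => p.1 * p.2) ⁻¹' {x : ℝ | k ≤ |x|})) ∂ν
      ≤ ∫⁻ t, ENNReal.ofReal (4 / (27 * k ^ 2) * t ^ 2) ∂ν := lintegral_mono key
    _ = ENNReal.ofReal (∫ t, 4 / (27 * k ^ 2) * t ^ 2 ∂ν) := by
        rw [← ofReal_integral_eq_lintegral_ofReal]
        · exact hint.const_mul _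
        · filter_upwards with t; positivity
    _ = ENNReal.ofReal (4 * σ ^ 2 / (9 * k ^ 2)) := by
        rw [integral_const_mul, hmom]
        congr 1
        field_simp
        ring
end

section
/- Let σ, k > 0 satisfy 4σ² ≤ 3k². Then there exists a probability measure ν on ℝ with ∫ t dν(t) = 0 and ∫ t² dν(t) = 3σ² such that the pushforward μ₀ of ((Lebesgue measure restricted to (0,1)) ⊗ ν) under (u,t) ↦ u·t satisfies ∫ x dμ₀(x) = 0, ∫ x² dμ₀(x) = σ², and μ₀({x ∈ ℝ : |x| ≥ k}) = 4σ²/(9k²). -/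
open MeasureTheory
open scoped ENNReal

lemma my_prod_smul_right {α β : Type*} [MeasurableSpace α] [MeasurableSpace β]
    (μ : Measure α) (ν : Measure β) [SFinite ν] (c : ℝ≥0∞) :
    μ.prod (c • ν) = c • μ.prod ν := by
  ext s hs
  rw [Measure.smul_apply, Measure.prod_apply hs, Measure.prod_apply hs, smul_eq_mul,
    ← lintegral_const_mul c (measurable_measure_prodMk_left hs)]
  simp

lemma my_int_u : (∫ u in Set.Ioo (0:ℝ) 1, u) = 1/2 := by
  rw [← integral_Ioc_eq_integral_Ioo, ← intervalIntegral.integral_of_le zero_le_one]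
  simp

lemma my_int_u2 : (∫ u in Set.Ioo (0:ℝ) 1, u ^ 2) = 1/3 := by
  rw [← integral_Ioc_eq_integral_Ioo, ← intervalIntegral.integral_of_le zero_le_one,
    integral_pow]
  norm_num

lemma my_integrable_dirac {f : ℝ → ℝ} (hf : StronglyMeasurable f) (a : ℝ) :
    Integrable f (Measure.dirac a) := by
  refine ⟨hf.aestronglyMeasurable, ?_⟩
  rw [HasFiniteIntegral, lintegral_dirac]
  exact ENNReal.coe_lt_top

/-- **Tightness of the Gauss inequality.** If `4σ² ≤ 3k²`, there is a probability
measure `ν` with mean `0` and second moment `3σ²` whose Khinchine transform `μ₀`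
has mean `0`, variance `σ²`, and tail mass beyond `k` exactly `4σ²/(9k²)`. -/
theorem stmt1 (σ k : ℝ) (hσ : 0 < σ) (hk : 0 < k) (hbd : 4 * σ ^ 2 ≤ 3 * k ^ 2) :
    ∃ ν : Measure ℝ, IsProbabilityMeasure ν ∧
      (∫ t, t ∂ν = 0) ∧ (∫ t, t ^ 2 ∂ν = 3 * σ ^ 2) ∧
      (∫ x, x ∂(khinchine ν) = 0) ∧ (∫ x, x ^ 2 ∂(khinchine ν) = σ ^ 2) ∧
      khinchine ν {x : ℝ | k ≤ |x|} = ENNReal.ofReal (4 * σ ^ 2 / (9 * k ^ 2)) := by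
  have hk2 : (0:ℝ) < k ^ 2 := by positivity
  set a : ℝ := 3 * k / 2 with ha
  set p : ℝ := 2 * σ ^ 2 / (3 * k ^ 2) with hp
  have hp0 : 0 < p := by positivity
  have hp1 : 2 * p ≤ 1 := by
    have h2p : 2 * p = 4 * σ ^ 2 / (3 * k ^ 2) := by rw [hp]; ring
    rw [h2p]
    exact (div_le_one (by positivity)).mpr hbd
  set pE : ℝ≥0∞ := ENNReal.ofReal p with hpE
  have hpE_ne : pE ≠ ⊤ := ENNReal.ofReal_ne_top
  have hpE_le : pE + pE ≤ 1 := by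
    rw [hpE, ← ENNReal.ofReal_add hp0.le hp0.le, ← ENNReal.ofReal_one]
    exact ENNReal.ofReal_le_ofReal (by linarith)
  set qE : ℝ≥0∞ := 1 - (pE + pE) with hqE
  have hqE_ne : qE ≠ ⊤ := (lt_of_le_of_lt tsub_le_self ENNReal.one_lt_top).ne
  set ν : Measure ℝ :=
    pE • Measure.dirac a + pE • Measure.dirac (-a) + qE • Measure.dirac 0 with hν
  -- key integral formula for ν
  have key : ∀ f : ℝ → ℝ, StronglyMeasurable f →
      ∫ t, f t ∂ν = p * f a + p * f (-a) + qE.toReal * f 0 := by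
    intro f hf
    have i1 := (my_integrable_dirac hf a).smul_measure hpE_ne
    have i2 := (my_integrable_dirac hf (-a)).smul_measure hpE_ne
    have i3 := (my_integrable_dirac hf 0).smul_measure hqE_ne
    rw [hν, integral_add_measure (i1.add_measure i2) i3, integral_add_measure i1 i2,
      integral_smul_measure, integral_smul_measure, integral_smul_measure,
      integral_dirac, integral_dirac, integral_dirac, hpE, ENNReal.toReal_ofReal hp0.le]
    simp [smul_eq_mul]
  have hprob : IsProbabilityMeasure ν := by
    constructor
    rw [hν]
    simp only [Measure.add_apply, Measure.smul_apply, Measure.dirac_apply' _ MeasurableSet.univ,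
      Set.indicator_univ, Pi.one_apply, smul_eq_mul, mul_one]
    exact add_tsub_cancel_of_le hpE_le
  -- the uniform factor
  set μU : Measure ℝ := volume.restrict (Set.Ioo (0 : ℝ) 1) with hμU
  set Mt : ℝ → Measure ℝ := fun t => Measure.map (fun u => u * t) μU with hMt
  have hfm : Measurable (fun q : ℝ × ℝ => q.1 * q.2) := measurable_fst.mul measurable_snd
  have hdec : khinchine ν = pE • Mt a + pE • Mt (-a) + qE • Mt 0 := by
    rw [khinchine, hν, Measure.prod_add, Measure.prod_add,
      my_prod_smul_right, my_prod_smul_right, my_prod_smul_right,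
      Measure.map_add _ _ hfm, Measure.map_add _ _ hfm,
      Measure.map_smul, Measure.map_smul, Measure.map_smul,
      Measure.prod_dirac, Measure.prod_dirac, Measure.prod_dirac,
      Measure.map_map hfm measurable_prodMk_right,
      Measure.map_map hfm measurable_prodMk_right,
      Measure.map_map hfm measurable_prodMk_right]
    rfl
  -- integrability of x and x^2 against Mt t
  have hintOn : ∀ g : ℝ → ℝ, Continuous g → IntegrableOn g (Set.Ioo (0:ℝ) 1) volume :=
    fun g hg => (hg.continuousOn.integrableOn_Icc).mono_set Set.Ioo_subset_Icc_self
  have hint1 : ∀ t : ℝ, Integrable (fun x => x) (Mt t) := by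
    intro t
    rw [hMt]
    refine (integrable_map_measure aestronglyMeasurable_id
      (measurable_mul_const t).aemeasurable).mpr ?_
    exact hintOn _ (continuous_id.mul continuous_const)
  have hint2 : ∀ t : ℝ, Integrable (fun x => x ^ 2) (Mt t) := by
    intro t
    rw [hMt]
    refine (integrable_map_measure (measurable_id.pow_const 2).aestronglyMeasurable
      (measurable_mul_const t).aemeasurable).mpr ?_
    exact hintOn _ ((continuous_id.mul continuous_const).pow 2)
  -- integral values against Mt t
  have hvx : ∀ t : ℝ, ∫ x, x ∂(Mt t) = t / 2 := by
    intro t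
    have h := integral_map (μ := μU) (φ := fun u => u * t) (f := fun x => x)
      (measurable_mul_const t).aemeasurable measurable_id.aestronglyMeasurable
    simp only [hMt]
    rw [h, hμU, integral_mul_const, my_int_u]
    ring
  have hvx2 : ∀ t : ℝ, ∫ x, x ^ 2 ∂(Mt t) = t ^ 2 / 3 := by
    intro t
    have h := integral_map (μ := μU) (φ := fun u => u * t) (f := fun x => x ^ 2)
      (measurable_mul_const t).aemeasurable (measurable_id.pow_const 2).aestronglyMeasurable
    simp only [hMt]
    rw [h, hμU]
    simp only [mul_pow]
    rw [integral_mul_const, my_int_u2]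
    ring
  -- key integral formula for khinchine ν
  have keyK : ∀ f : ℝ → ℝ, (∀ t, Integrable f (Mt t)) →
      ∫ x, f x ∂(khinchine ν)
        = p * (∫ x, f x ∂(Mt a)) + p * (∫ x, f x ∂(Mt (-a)))
          + qE.toReal * (∫ x, f x ∂(Mt 0)) := by
    intro f hf
    have i1 := (hf a).smul_measure hpE_ne
    have i2 := (hf (-a)).smul_measure hpE_ne
    have i3 := (hf 0).smul_measure hqE_ne
    rw [hdec, integral_add_measure (i1.add_measure i2) i3, integral_add_measure i1 i2,
      integral_smul_measure, integral_smul_measure, integral_smul_measure,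
      hpE, ENNReal.toReal_ofReal hp0.le]
    simp [smul_eq_mul]
  refine ⟨ν, hprob, ?_, ?_, ?_, ?_, ?_⟩
  · rw [key (fun t => t) stronglyMeasurable_id]
    ring
  · rw [key (fun t => t ^ 2) (measurable_id.pow_const 2).stronglyMeasurable]
    rw [hp, ha]
    field_simp
    ring
  · rw [keyK _ hint1, hvx, hvx, hvx]
    ring
  · rw [keyK _ hint2, hvx2, hvx2, hvx2]
    rw [hp, ha]
    field_simp
    ring
  · -- tail mass
    have hS : MeasurableSet {x : ℝ | k ≤ |x|} :=
      measurableSet_le measurable_const measurable_abs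
    have happly : ∀ t : ℝ, Mt t {x : ℝ | k ≤ |x|}
        = volume ((fun u => u * t) ⁻¹' {x : ℝ | k ≤ |x|} ∩ Set.Ioo (0:ℝ) 1) := by
      intro t
      rw [hMt]
      rw [Measure.map_apply (measurable_mul_const t) hS, hμU,
        Measure.restrict_apply ((measurable_mul_const t) hS)]
    have hset : ∀ t : ℝ, |t| = a →
        (fun u => u * t) ⁻¹' {x : ℝ | k ≤ |x|} ∩ Set.Ioo (0:ℝ) 1 = Set.Ico (2/3 : ℝ) 1 := by
      intro t ht
      ext u
      simp only [Set.mem_inter_iff, Set.mem_preimage, Set.mem_setOf_eq, Set.mem_Ioo,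
        Set.mem_Ico]
      constructor
      · rintro ⟨h1, h2, h3⟩
        rw [abs_mul, ht, abs_of_pos h2, ha] at h1
        exact ⟨by nlinarith, h3⟩
      · rintro ⟨h1, h2⟩
        have h0 : (0:ℝ) < u := by linarith
        refine ⟨?_, h0, h2⟩
        rw [abs_mul, ht, abs_of_pos h0, ha]
        nlinarith
    have hvol : volume (Set.Ico (2/3 : ℝ) 1) = ENNReal.ofReal (1/3) := by
      rw [Real.volume_Ico]
      norm_num
    have hz : Mt 0 {x : ℝ | k ≤ |x|} = 0 := by
      rw [happly 0]
      have : (fun u : ℝ => u * 0) ⁻¹' {x : ℝ | k ≤ |x|} = ∅ := by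
        ext u
        simp only [Set.mem_preimage, Set.mem_setOf_eq, mul_zero, abs_zero,
          Set.mem_empty_iff_false, iff_false, not_le]
        exact hk
      rw [this, Set.empty_inter, measure_empty]
    have hTa : Mt a {x : ℝ | k ≤ |x|} = ENNReal.ofReal (1/3) := by
      rw [happly a, hset a (abs_of_pos (by rw [ha]; positivity)), hvol]
    have hTna : Mt (-a) {x : ℝ | k ≤ |x|} = ENNReal.ofReal (1/3) := by
      rw [happly (-a), hset (-a) (by rw [abs_neg]; exact abs_of_pos (by rw [ha]; positivity)),
        hvol]
    rw [hdec]
    simp only [Measure.add_apply, Measure.smul_apply, smul_eq_mul, hTa, hTna, hz, mul_zero,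
      add_zero]
    rw [hpE, ← ENNReal.ofReal_mul hp0.le, ← ENNReal.ofReal_add (by positivity) (by positivity)]
    congr 1
    rw [hp]
    field_simp
    ring
end

section
/- Let σ > 0, k > 0, and s ∈ (0, 1/3). Then the following two conditions are equivalent: (i) for every probability measure ν on ℝ with ∫ t dν(t) = 0 and ∫ t² dν(t) = 3σ², the pushforward μ₀ of ((Lebesgue measure restricted to (0,1)) ⊗ ν) under (u,t) ↦ u·t satisfies μ₀({x ∈ ℝ : −k ≤ x ≤ k}) ≥ 1 − s; (ii) 4σ² ≤ 9 s k². -/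
/-!
Given `ζ = t`, the product `U t` leaves `[-k, k]` with probability `(1 - k/|t|)⁺`, and
`(1 - k/|t|)⁺ ≤ 4 t² / (27 k²)` because `4|t|³ - 27k²|t| + 27k³ = (2|t| - 3k)² (|t| + 3k) ≥ 0`.
Integrating against `ν` gives the Gauss bound `4σ²/(9k²)` for the mass outside `[-k, k]`.
Equality holds at `|t| = 3k/2`, so when `3σ² ≤ (3k/2)²` the law `ν` with atoms `±3k/2` (and the
remaining mass at `0`) attains the bound. Otherwise the two-point law `±√3 σ` puts mass
`1 - k/(√3 σ) > 1/3 > s` outside `[-k, k]`.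
-/

open MeasureTheory

open Set
open scoped ENNReal

lemma khinchine_apply (ν : Measure ℝ) [SFinite ν] {S : Set ℝ} (hS : MeasurableSet S) :
    khinchine ν S = ∫⁻ t, volume.restrict (Ioo 0 1) {u | u * t ∈ S} ∂ν := by
  have hmul : Measurable fun p : ℝ × ℝ => p.1 * p.2 := by fun_prop
  rw [khinchine, Measure.map_apply hmul hS, Measure.prod_apply_symm (hmul hS)]
  rfl

instance isProbabilityMeasure_khinchine (ν : Measure ℝ) [IsProbabilityMeasure ν] :
    IsProbabilityMeasure (khinchine ν) := by
  have : IsProbabilityMeasure (volume.restrict (Ioo (0 : ℝ) 1)) := ⟨by simp⟩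
  exact Measure.isProbabilityMeasure_map (by fun_prop)

/-- The Lebesgue measure of `{u ∈ (0,1) | k < |u t|}`, i.e. `(1 - k/|t|)⁺`; at `t = 0` division by
zero yields the correct value `0`. -/
noncomputable def escapeProb (k t : ℝ) : ℝ := (|t| - k) / |t|

lemma volume_restrict_Ioo_escape {k : ℝ} (hk : 0 ≤ k) (t : ℝ) :
    volume.restrict (Ioo 0 1) {u | k < |u * t|} = ENNReal.ofReal (escapeProb k t) := by
  have hmeas : MeasurableSet {u : ℝ | k < |u * t|} :=
    measurableSet_lt measurable_const (by fun_prop)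
  rw [Measure.restrict_apply hmeas]
  rcases eq_or_ne t 0 with rfl | ht
  · simp [escapeProb, hk.not_gt]
  have hpos : 0 < |t| := abs_pos.2 ht
  have hset : {u | k < |u * t|} ∩ Ioo 0 1 = Ioo (k / |t|) 1 := by
    ext u
    simp only [mem_inter_iff, mem_ofPred_eq, mem_Ioo, div_lt_iff₀ hpos]
    constructor
    · rintro ⟨hku, hu0, hu1⟩
      rw [abs_mul, abs_of_pos hu0] at hku
      exact ⟨hku, hu1⟩
    · rintro ⟨hku, hu1⟩
      have hu0 : 0 < u := by nlinarith
      rw [abs_mul, abs_of_pos hu0]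
      exact ⟨hku, hu0, hu1⟩
  rw [hset, Real.volume_Ioo, escapeProb, sub_div, div_self hpos.ne']

lemma khinchine_abs_gt (ν : Measure ℝ) [SFinite ν] {k : ℝ} (hk : 0 ≤ k) :
    khinchine ν {x | k < |x|} = ∫⁻ t, ENNReal.ofReal (escapeProb k t) ∂ν := by
  rw [khinchine_apply ν (measurableSet_lt measurable_const (by fun_prop))]
  exact lintegral_congr fun t => volume_restrict_Ioo_escape hk t

lemma escapeProb_le {k : ℝ} (hk : 0 < k) (t : ℝ) : escapeProb k t ≤ 4 * t ^ 2 / (27 * k ^ 2) := by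
  rcases eq_or_ne t 0 with rfl | ht
  · simp [escapeProb]
  have hpos : 0 < |t| := abs_pos.2 ht
  rw [escapeProb, ← sq_abs t, div_le_div_iff₀ hpos (by positivity)]
  nlinarith [mul_nonneg (sq_nonneg (2 * |t| - 3 * k)) (by positivity : 0 ≤ |t| + 3 * k)]

lemma khinchine_abs_gt_le (ν : Measure ℝ) [SFinite ν] {k : ℝ} (hk : 0 < k)
    (hν : Integrable (fun t => t ^ 2) ν) :
    khinchine ν {x | k < |x|} ≤ ENNReal.ofReal (4 * (∫ t, t ^ 2 ∂ν) / (27 * k ^ 2)) := by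
  calc khinchine ν {x | k < |x|} = ∫⁻ t, ENNReal.ofReal (escapeProb k t) ∂ν :=
        khinchine_abs_gt ν hk.le
    _ ≤ ∫⁻ t, ENNReal.ofReal (4 / (27 * k ^ 2) * t ^ 2) ∂ν :=
        lintegral_mono fun t => ENNReal.ofReal_le_ofReal <|
          (escapeProb_le hk t).trans_eq (by ring)
    _ = ENNReal.ofReal (∫ t, 4 / (27 * k ^ 2) * t ^ 2 ∂ν) :=
        (ofReal_integral_eq_lintegral_ofReal (hν.const_mul _)
          (Filter.Eventually.of_forall fun t => by positivity)).symm
    _ = ENNReal.ofReal (4 * (∫ t, t ^ 2 ∂ν) / (27 * k ^ 2)) := by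
        rw [integral_const_mul]; ring_nf

lemma ofReal_one_sub_le_khinchine_iff (ν : Measure ℝ) [IsProbabilityMeasure ν] (k : ℝ)
    {s : ℝ} (hs : 0 ≤ s) :
    ENNReal.ofReal (1 - s) ≤ khinchine ν {x | -k ≤ x ∧ x ≤ k} ↔
      khinchine ν {x | k < |x|} ≤ ENNReal.ofReal s := by
  have hcompl : {x : ℝ | -k ≤ x ∧ x ≤ k} = {x | k < |x|}ᶜ := by
    ext x; simp [abs_le]
  rw [hcompl, prob_compl_eq_one_sub (measurableSet_lt measurable_const (by fun_prop)),
    ENNReal.ofReal_sub _ hs, ENNReal.ofReal_one,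
    ENNReal.sub_le_sub_iff_left prob_le_one ENNReal.one_ne_top]

noncomputable def threePoint (p a : ℝ) : Measure ℝ :=
  ENNReal.ofReal (1 - p) • Measure.dirac 0 +
    ENNReal.ofReal (p / 2) • (Measure.dirac a + Measure.dirac (-a))

section threePoint

variable {p : ℝ} (a : ℝ)

instance sFinite_threePoint : SFinite (threePoint p a) := by
  unfold threePoint; infer_instance

lemma isProbabilityMeasure_threePoint (hp0 : 0 ≤ p) (hp1 : p ≤ 1) :
    IsProbabilityMeasure (threePoint p a) := by
  constructor
  simp only [threePoint, Measure.add_apply, Measure.smul_apply, measure_univ, smul_eq_mul,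
    mul_one]
  rw [← ENNReal.ofReal_one, ← ENNReal.ofReal_add zero_le_one zero_le_one,
    ← ENNReal.ofReal_mul (by positivity), ← ENNReal.ofReal_add (by linarith) (by positivity)]
  norm_num

lemma integral_threePoint (hp0 : 0 ≤ p) (hp1 : p ≤ 1) (f : ℝ → ℝ) :
    ∫ t, f t ∂threePoint p a = (1 - p) * f 0 + p / 2 * (f a + f (-a)) := by
  have hdirac (b : ℝ) : Integrable f (Measure.dirac b) := integrable_dirac enorm_lt_top
  rw [threePoint, integral_add_measure ((hdirac 0).smul_measure ENNReal.ofReal_ne_top)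
      (((hdirac a).add_measure (hdirac (-a))).smul_measure ENNReal.ofReal_ne_top),
    integral_smul_measure, integral_smul_measure, integral_add_measure (hdirac a) (hdirac (-a)),
    integral_dirac, integral_dirac, integral_dirac, ENNReal.toReal_ofReal (by linarith),
    ENNReal.toReal_ofReal (by linarith), smul_eq_mul, smul_eq_mul]

lemma lintegral_threePoint (f : ℝ → ℝ≥0∞) :
    ∫⁻ t, f t ∂threePoint p a =
      ENNReal.ofReal (1 - p) * f 0 + ENNReal.ofReal (p / 2) * (f a + f (-a)) := by
  simp only [threePoint, lintegral_add_measure, lintegral_smul_measure, lintegral_dirac,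
    smul_eq_mul]

lemma integral_id_threePoint (hp0 : 0 ≤ p) (hp1 : p ≤ 1) : ∫ t, t ∂threePoint p a = 0 := by
  rw [integral_threePoint a hp0 hp1]; ring

lemma integral_sq_threePoint (hp0 : 0 ≤ p) (hp1 : p ≤ 1) :
    ∫ t, t ^ 2 ∂threePoint p a = p * a ^ 2 := by
  rw [integral_threePoint a hp0 hp1]; ring

end threePoint

lemma khinchine_threePoint_abs_gt (a : ℝ) {p k : ℝ} (hp : 0 ≤ p) (hk : 0 ≤ k) :
    khinchine (threePoint p a) {x | k < |x|} = ENNReal.ofReal (p * escapeProb k a) := by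
  have hhalf : ENNReal.ofReal (p / 2) * 2 = ENNReal.ofReal p := by
    rw [← ENNReal.ofReal_ofNat 2, ← ENNReal.ofReal_mul (by positivity)]; ring_nf
  rw [khinchine_abs_gt _ hk, lintegral_threePoint, ENNReal.ofReal_mul hp, ← hhalf]
  simp [escapeProb, ← two_mul, mul_assoc]

lemma four_mul_sq_le_of_forall_escape {σ k s : ℝ} (hk : 0 < k) (hs : s < 1 / 3)
    (h : ∀ a, 3 * σ ^ 2 ≤ a ^ 2 → 3 * σ ^ 2 / a ^ 2 * escapeProb k a ≤ s) :
    4 * σ ^ 2 ≤ 9 * s * k ^ 2 := by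
  by_cases hσ : 3 * σ ^ 2 ≤ (3 * k / 2) ^ 2
  · have h₀ := h (3 * k / 2) hσ
    rw [escapeProb, abs_of_pos (by positivity)] at h₀
    field_simp at h₀
    nlinarith
  · replace hσ := not_le.1 hσ
    set a := Real.sqrt (3 * σ ^ 2)
    have ha : a ^ 2 = 3 * σ ^ 2 := Real.sq_sqrt (by positivity)
    have ha0 : 0 ≤ a := Real.sqrt_nonneg _
    have hka : 3 * k / 2 < a := by nlinarith
    have h₀ := h a ha.ge
    have hσ0 : 3 * σ ^ 2 ≠ 0 := ((by positivity : (0 : ℝ) < (3 * k / 2) ^ 2).trans hσ).ne'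
    rw [ha, div_self hσ0, one_mul, escapeProb, abs_of_nonneg ha0, div_le_iff₀ (by linarith)] at h₀
    nlinarith

/-- **One-dimensional core of Theorem 1.** For `σ, k > 0` and `s ∈ (0, 1/3)`, the
distributionally robust chance constraint `μ₀([-k, k]) ≥ 1 - s` over all mean-`0`,
variance-`σ²`, unimodal-about-`0` distributions `μ₀` (in Khinchine form) holds
exactly when `4σ² ≤ 9 s k²`. -/
theorem stmt2 (σ k s : ℝ) (hσ : 0 < σ) (hk : 0 < k) (hs : s ∈ Set.Ioo (0 : ℝ) (1 / 3)) :
    (∀ ν : Measure ℝ, IsProbabilityMeasure ν →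
        (∫ t, t ∂ν = 0) → (∫ t, t ^ 2 ∂ν = 3 * σ ^ 2) →
        ENNReal.ofReal (1 - s) ≤ khinchine ν {x : ℝ | -k ≤ x ∧ x ≤ k}) ↔
      4 * σ ^ 2 ≤ 9 * s * k ^ 2 := by
  obtain ⟨hs0, hs1⟩ := hs
  constructor
  · refine fun h => four_mul_sq_le_of_forall_escape hk hs1 fun a ha => ?_
    have ha0 : a ^ 2 ≠ 0 := ((by positivity : (0 : ℝ) < 3 * σ ^ 2).trans_le ha).ne'
    set p := 3 * σ ^ 2 / a ^ 2
    have hp0 : 0 ≤ p := by positivity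
    have hp1 : p ≤ 1 := div_le_one_of_le₀ ha (sq_nonneg a)
    have hprob := isProbabilityMeasure_threePoint a hp0 hp1
    have hvar : ∫ t, t ^ 2 ∂threePoint p a = 3 * σ ^ 2 := by
      rw [integral_sq_threePoint a hp0 hp1, div_mul_cancel₀ _ ha0]
    have htail := (ofReal_one_sub_le_khinchine_iff _ k hs0.le).1
      (h _ hprob (integral_id_threePoint a hp0 hp1) hvar)
    rwa [khinchine_threePoint_abs_gt a hp0 hk.le, ENNReal.ofReal_le_ofReal_iff hs0.le] at htail
  · intro h ν hν _ hvar
    rw [ofReal_one_sub_le_khinchine_iff ν k hs0.le]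
    have hint : Integrable (fun t => t ^ 2) ν := by
      by_contra hni
      rw [integral_undef hni] at hvar
      exact (by positivity : (0 : ℝ) < 3 * σ ^ 2).ne hvar
    refine (khinchine_abs_gt_le ν hk hint).trans (ENNReal.ofReal_le_ofReal ?_)
    rw [hvar, div_le_iff₀ (by positivity)]
    linarith
end

section
/- Let σ > 0, a > 0, b > 0, and s > 0. Then 4σ² ≤ 9·s·(min(a,b))² holds if and only if there exist real numbers r ≥ 0 and z ≥ 0 satisfying: √(8/3 + (r − z)²) ≤ r + z, √((s − 1)² + 4z²) ≤ s + 1, σ·r ≤ a, and σ·r ≤ b. -/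
/-- **Per-component equivalence in Theorem 1.** For `σ, a, b, s > 0`, the
Gauss-inequality condition `4σ² ≤ 9·s·(min a b)²` holds iff the second-order cone
system (The11)–(The14) in the auxiliary variables `r, z ≥ 0` is feasible. -/
theorem stmt8 (σ a b s : ℝ) (hσ : 0 < σ) (ha : 0 < a) (hb : 0 < b) (hs : 0 < s) :
    4 * σ ^ 2 ≤ 9 * s * (min a b) ^ 2 ↔
      ∃ r z : ℝ, 0 ≤ r ∧ 0 ≤ z ∧
        Real.sqrt (8 / 3 + (r - z) ^ 2) ≤ r + z ∧
        Real.sqrt ((s - 1) ^ 2 + 4 * z ^ 2) ≤ s + 1 ∧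
        σ * r ≤ a ∧ σ * r ≤ b := by
  have hmpos : 0 < min a b := lt_min ha hb
  constructor
  · intro h
    set t := Real.sqrt s with ht
    have htpos : 0 < t := Real.sqrt_pos.mpr hs
    have ht2 : t ^ 2 = s := Real.sq_sqrt hs.le
    refine ⟨2 / (3 * t), t, by positivity, htpos.le, ?_, ?_, ?_, ?_⟩
    · have heq : 8 / 3 + (2 / (3 * t) - t) ^ 2 = (2 / (3 * t) + t) ^ 2 := by
        field_simp
        ring
      rw [heq, Real.sqrt_sq (by positivity)]
    · have heq : (s - 1) ^ 2 + 4 * t ^ 2 = (s + 1) ^ 2 := by rw [ht2]; ring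
      rw [heq, Real.sqrt_sq (by positivity)]
    · have hma : min a b ≤ a := min_le_left a b
      rw [show σ * (2 / (3 * t)) = 2 * σ / (3 * t) by ring, div_le_iff₀ (by positivity)]
      rw [← ht2] at h
      nlinarith [mul_pos htpos ha, mul_pos htpos hmpos,
        mul_le_mul hma hma hmpos.le ha.le, sq_nonneg t]
    · have hmb : min a b ≤ b := min_le_right a b
      rw [show σ * (2 / (3 * t)) = 2 * σ / (3 * t) by ring, div_le_iff₀ (by positivity)]
      rw [← ht2] at h
      nlinarith [mul_pos htpos hb, mul_pos htpos hmpos,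
        mul_le_mul hmb hmb hmpos.le hb.le, sq_nonneg t]
  · rintro ⟨r, z, hr, hz, h1, h2, hra, hrb⟩
    have hrz : 2 / 3 ≤ r * z := by
      have hx : (0:ℝ) ≤ 8 / 3 + (r - z) ^ 2 := by positivity
      have := Real.sq_sqrt hx
      nlinarith [Real.sqrt_nonneg (8 / 3 + (r - z) ^ 2)]
    have hz2 : z ^ 2 ≤ s := by
      have hx : (0:ℝ) ≤ (s - 1) ^ 2 + 4 * z ^ 2 := by positivity
      have := Real.sq_sqrt hx
      nlinarith [Real.sqrt_nonneg ((s - 1) ^ 2 + 4 * z ^ 2)]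
    have hz0 : 0 < z := by nlinarith
    have hm : σ * r ≤ min a b := le_min hra hrb
    have h3 : 2 * σ ≤ 3 * (z * min a b) := by
      nlinarith [mul_le_mul_of_nonneg_right hm hz0.le, mul_le_mul_of_nonneg_left hrz hσ.le]
    nlinarith [mul_pos hz0 hmpos, sq_nonneg (min a b), mul_le_mul_of_nonneg_right hz2 (sq_nonneg (min a b))]
end

section
/- Let K be a positive integer and let P be a probability measure on ℝ^K (functions from Fin K to ℝ). Suppose that for each k there are real numbers μ_k, σ_k > 0 and a probability measure ν_k on ℝ with ∫ t dν_k = 0 and ∫ t² dν_k = 3σ_k², such that the marginal law of the k-th coordinate under P equals the pushforward of ((Lebesgue measure restricted to (0,1)) ⊗ ν_k) under (u,t) ↦ μ_k + u·t. Suppose further that there exist real numbers u, and for each k real numbers ε^L_k, ε^U_k, r_k ≥ 0, z_k ≥ 0, s_k ≥ 0, satisfying: √(8/3 + (r_k − z_k)²) ≤ r_k + z_k, √((s_k − 1)² + 4z_k²) ≤ s_k + 1, σ_k·r_k ≤ μ_k − ε^L_k, σ_k·r_k ≤ ε^U_k − μ_k, and Σ_{k=1}^K s_k ≤ 1 − u.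 Then P({ε ∈ ℝ^K : ε^L_k ≤ ε_k ≤ ε^U_k for all k}) ≥ u. -/
open MeasureTheory

/-- The shifted Khinchine transform: the law of `μ + U * ζ` where `U` is uniform on
`(0,1)`, independent of `ζ` with law `ν`.  By Khinchine's representation theorem,
this is the general form of a distribution unimodal about `μ`. -/
noncomputable def khinchineAbout (μ : ℝ) (ν : Measure ℝ) : Measure ℝ :=
  Measure.map (fun p : ℝ × ℝ => μ + p.1 * p.2)
    ((volume.restrict (Set.Ioo (0 : ℝ) 1)).prod ν)

/-- Key pointwise real inequality: `1 - a/x ≤ 4 x² / (27 a²)` for `x, a > 0`. -/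
lemma gauss_pointwise {a x : ℝ} (ha : 0 < a) (hx : 0 < x) :
    1 - a / x ≤ 4 * x ^ 2 / (27 * a ^ 2) := by
  have h1 : 1 - a / x = (x - a) / x := by field_simp
  rw [h1, div_le_div_iff₀ hx (by positivity)]
  nlinarith [mul_nonneg (sq_nonneg (2 * x - 3 * a)) (by linarith : (0:ℝ) ≤ x + 3 * a)]

/-- Slice bound: the uniform measure of `{u | a < |u*t|}` is at most `4t²/(27a²)`. -/
lemma slice_bound {a : ℝ} (ha : 0 < a) (t : ℝ) :
    (volume.restrict (Set.Ioo (0:ℝ) 1)) {u | a < |u * t|}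
      ≤ ENNReal.ofReal (4 * t ^ 2 / (27 * a ^ 2)) := by
  have hmeas : MeasurableSet {u : ℝ | a < |u * t|} := by
    have : Measurable fun u : ℝ => |u * t| := by fun_prop
    exact measurableSet_lt measurable_const this
  rw [Measure.restrict_apply hmeas]
  rcases eq_or_ne t 0 with rfl | ht
  · have hempty : {u : ℝ | a < |u * 0|} = ∅ := by
      ext u; simp only [mul_zero, abs_zero, Set.mem_setOf_eq, Set.mem_empty_iff_false,
        iff_false, not_lt]; linarith
    rw [hempty, Set.empty_inter, measure_empty]
    positivity
  · have htpos : 0 < |t| := abs_pos.mpr ht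
    have hsub : {u : ℝ | a < |u * t|} ∩ Set.Ioo 0 1 ⊆ Set.Ioo (a / |t|) 1 := by
      rintro u ⟨hu, hu0, hu1⟩
      constructor
      · rw [div_lt_iff₀ htpos]
        calc a < |u * t| := hu
          _ = u * |t| := by rw [abs_mul, abs_of_pos hu0]
      · exact hu1
    calc volume ({u : ℝ | a < |u * t|} ∩ Set.Ioo 0 1)
        ≤ volume (Set.Ioo (a / |t|) 1) := measure_mono hsub
      _ = ENNReal.ofReal (1 - a / |t|) := Real.volume_Ioo
      _ ≤ ENNReal.ofReal (4 * t ^ 2 / (27 * a ^ 2)) := by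
          apply ENNReal.ofReal_le_ofReal
          have := gauss_pointwise ha htpos
          calc 1 - a / |t| ≤ 4 * |t| ^ 2 / (27 * a ^ 2) := this
            _ = 4 * t ^ 2 / (27 * a ^ 2) := by rw [sq_abs]

/-- Gauss-type bound for the Khinchine measure: marginal violation probability. -/
lemma khinchine_bound (μ σ : ℝ) (hσ : 0 < σ) (ν : Measure ℝ) [IsProbabilityMeasure ν]
    (hvar : ∫ t, t ^ 2 ∂ν = 3 * σ ^ 2) (εL εU r s : ℝ) (hr : 0 < r)
    (hs4 : 4 ≤ 9 * r ^ 2 * s)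
    (h13 : σ * r ≤ μ - εL) (h14 : σ * r ≤ εU - μ) :
    khinchineAbout μ ν {x | ¬(εL ≤ x ∧ x ≤ εU)} ≤ ENNReal.ofReal s := by
  set a := σ * r with ha_def
  have ha : 0 < a := mul_pos hσ hr
  -- the violation set is inside {x | a < |x - μ|}
  have hsub : {x : ℝ | ¬(εL ≤ x ∧ x ≤ εU)} ⊆ {x : ℝ | a < |x - μ|} := by
    intro x hx
    simp only [Set.mem_setOf_eq, not_and_or, not_le] at hx
    simp only [Set.mem_setOf_eq]
    rcases hx with hx | hx
    · rw [lt_abs]; right; nlinarith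
    · rw [lt_abs]; left; nlinarith
  have hTmeas : MeasurableSet {x : ℝ | a < |x - μ|} := by
    have : Measurable fun x : ℝ => |x - μ| := by fun_prop
    exact measurableSet_lt measurable_const this
  have hfmeas : Measurable fun p : ℝ × ℝ => μ + p.1 * p.2 := by fun_prop
  have hmap : khinchineAbout μ ν {x | a < |x - μ|}
      = ((volume.restrict (Set.Ioo (0:ℝ) 1)).prod ν) {p : ℝ × ℝ | a < |p.1 * p.2|} := by
    rw [khinchineAbout, Measure.map_apply hfmeas hTmeas]
    congr 1
    ext p
    simp [add_sub_cancel_left]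
  have hPmeas : MeasurableSet {p : ℝ × ℝ | a < |p.1 * p.2|} := by
    have : Measurable fun p : ℝ × ℝ => |p.1 * p.2| := by fun_prop
    exact measurableSet_lt measurable_const this
  -- integrability of t^2
  have hint : Integrable (fun t : ℝ => t ^ 2) ν := by
    by_contra h
    rw [integral_undef h] at hvar
    nlinarith
  calc khinchineAbout μ ν {x | ¬(εL ≤ x ∧ x ≤ εU)}
      ≤ khinchineAbout μ ν {x | a < |x - μ|} := measure_mono hsub
    _ = ((volume.restrict (Set.Ioo (0:ℝ) 1)).prod ν) {p : ℝ × ℝ | a < |p.1 * p.2|} := hmap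
    _ = ∫⁻ t, (volume.restrict (Set.Ioo (0:ℝ) 1)) {u | a < |u * t|} ∂ν := by
        rw [Measure.prod_apply_symm hPmeas]; rfl
    _ ≤ ∫⁻ t, ENNReal.ofReal (4 * t ^ 2 / (27 * a ^ 2)) ∂ν :=
        lintegral_mono fun t => slice_bound ha t
    _ = ∫⁻ t, ENNReal.ofReal (4 / (27 * a ^ 2)) * ENNReal.ofReal (t ^ 2) ∂ν := by
        congr 1; ext t
        rw [← ENNReal.ofReal_mul (by positivity)]
        congr 1; ring
    _ = ENNReal.ofReal (4 / (27 * a ^ 2)) * ∫⁻ t, ENNReal.ofReal (t ^ 2) ∂ν :=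
        lintegral_const_mul _ (by fun_prop)
    _ = ENNReal.ofReal (4 / (27 * a ^ 2)) * ENNReal.ofReal (3 * σ ^ 2) := by
        rw [← ofReal_integral_eq_lintegral_ofReal hint
          (Filter.Eventually.of_forall fun t => sq_nonneg t), hvar]
    _ = ENNReal.ofReal (4 / (27 * a ^ 2) * (3 * σ ^ 2)) :=
        (ENNReal.ofReal_mul (by positivity)).symm
    _ ≤ ENNReal.ofReal s := by
        apply ENNReal.ofReal_le_ofReal
        have heq : 4 / (27 * a ^ 2) * (3 * σ ^ 2) = 4 / (9 * r ^ 2) := by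
          rw [ha_def]; field_simp; ring
        rw [heq, div_le_iff₀ (by positivity)]
        linarith

/-- **Sufficiency direction of Theorem 1.** If every marginal of `P` is unimodal
about its mean `μ k` with variance `σ k ^ 2` (in Khinchine form), and the
second-order cone system (The11)–(The16) is feasible, then the joint chance
constraint `P(ε ∈ [ε^L, ε^U]) ≥ u` holds. -/
theorem stmt9 (K : ℕ) (hK : 0 < K) (P : Measure (Fin K → ℝ)) [IsProbabilityMeasure P]
    (μ σ : Fin K → ℝ) (hσ : ∀ k, 0 < σ k) (ν : Fin K → Measure ℝ)
    (hν : ∀ k, IsProbabilityMeasure (ν k))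
    (hmean : ∀ k, ∫ t, t ∂(ν k) = 0)
    (hvar : ∀ k, ∫ t, t ^ 2 ∂(ν k) = 3 * (σ k) ^ 2)
    (hmarg : ∀ k, P.map (fun ε => ε k) = khinchineAbout (μ k) (ν k))
    (u : ℝ) (εL εU r z s : Fin K → ℝ)
    (hr : ∀ k, 0 ≤ r k) (hz : ∀ k, 0 ≤ z k) (hsnn : ∀ k, 0 ≤ s k)
    (h11 : ∀ k, Real.sqrt (8 / 3 + (r k - z k) ^ 2) ≤ r k + z k)
    (h12 : ∀ k, Real.sqrt ((s k - 1) ^ 2 + 4 * (z k) ^ 2) ≤ s k + 1)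
    (h13 : ∀ k, σ k * r k ≤ μ k - εL k)
    (h14 : ∀ k, σ k * r k ≤ εU k - μ k)
    (h15 : ∑ k, s k ≤ 1 - u) :
    ENNReal.ofReal u ≤ P {ε : Fin K → ℝ | ∀ k, εL k ≤ ε k ∧ ε k ≤ εU k} := by
  -- derive the algebraic consequences of the SOC constraints
  have hrz : ∀ k, 2 / 3 ≤ r k * z k := by
    intro k
    have h0 : (0:ℝ) ≤ 8 / 3 + (r k - z k) ^ 2 := by positivity
    have hsq := Real.sq_sqrt h0
    have hnn := Real.sqrt_nonneg (8 / 3 + (r k - z k) ^ 2)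
    nlinarith [h11 k]
  have hzs : ∀ k, (z k) ^ 2 ≤ s k := by
    intro k
    have h0 : (0:ℝ) ≤ (s k - 1) ^ 2 + 4 * (z k) ^ 2 := by positivity
    have hsq := Real.sq_sqrt h0
    have hnn := Real.sqrt_nonneg ((s k - 1) ^ 2 + 4 * (z k) ^ 2)
    nlinarith [h12 k]
  have hrpos : ∀ k, 0 < r k := by
    intro k
    by_contra h
    push_neg at h
    nlinarith [hrz k, hz k]
  have hs4 : ∀ k, 4 ≤ 9 * (r k) ^ 2 * s k := by
    intro k
    nlinarith [hrz k, hzs k, hrpos k, hz k]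
  -- the bad events
  set A : Fin K → Set (Fin K → ℝ) :=
    fun k => (fun ε : Fin K → ℝ => ε k) ⁻¹' {x | ¬(εL k ≤ x ∧ x ≤ εU k)} with hA_def
  have hSmeas : ∀ k, MeasurableSet {x : ℝ | ¬(εL k ≤ x ∧ x ≤ εU k)} := by
    intro k
    have : {x : ℝ | ¬(εL k ≤ x ∧ x ≤ εU k)} = (Set.Icc (εL k) (εU k))ᶜ := rfl
    rw [this]
    exact measurableSet_Icc.compl
  have hAmeas : ∀ k, MeasurableSet (A k) :=
    fun k => (hSmeas k).preimage (measurable_pi_apply k)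
  have hAbound : ∀ k, P (A k) ≤ ENNReal.ofReal (s k) := by
    intro k
    have := hν k
    have h1 : P (A k) = (P.map (fun ε => ε k)) {x | ¬(εL k ≤ x ∧ x ≤ εU k)} := by
      rw [Measure.map_apply (measurable_pi_apply k) (hSmeas k)]
    rw [h1, hmarg k]
    exact khinchine_bound (μ k) (σ k) (hσ k) (ν k) (hvar k) (εL k) (εU k) (r k) (s k)
      (hrpos k) (hs4 k) (h13 k) (h14 k)
  -- the good event
  set B : Set (Fin K → ℝ) := {ε : Fin K → ℝ | ∀ k, εL k ≤ ε k ∧ ε k ≤ εU k} with hB_def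
  have hBmeas : MeasurableSet B := by
    have : B = ⋂ k, (A k)ᶜ := by
      ext ε
      simp only [hB_def, hA_def, Set.mem_setOf_eq, Set.mem_iInter, Set.mem_compl_iff,
        Set.mem_preimage, not_not]
    rw [this]
    exact MeasurableSet.iInter fun k => (hAmeas k).compl
  have hBc : Bᶜ ⊆ ⋃ k, A k := by
    intro ε hε
    simp only [hB_def, Set.mem_compl_iff, Set.mem_setOf_eq, not_forall] at hε
    obtain ⟨k, hk⟩ := hε
    exact Set.mem_iUnion.mpr ⟨k, hk⟩
  have hBcbound : P Bᶜ ≤ ENNReal.ofReal (1 - u) := by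
    calc P Bᶜ ≤ P (⋃ k, A k) := measure_mono hBc
      _ ≤ ∑ k, P (A k) := measure_iUnion_fintype_le P A
      _ ≤ ∑ k, ENNReal.ofReal (s k) := Finset.sum_le_sum fun k _ => hAbound k
      _ = ENNReal.ofReal (∑ k, s k) :=
          (ENNReal.ofReal_sum_of_nonneg fun k _ => hsnn k).symm
      _ ≤ ENNReal.ofReal (1 - u) := ENNReal.ofReal_le_ofReal h15
  -- conclude
  have h1u : 0 ≤ 1 - u := le_trans (Finset.sum_nonneg fun k _ => hsnn k) h15
  rcases le_or_gt u 0 with hu | hu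
  · simp [ENNReal.ofReal_eq_zero.mpr hu]
  · have hcompl : P Bᶜ = 1 - P B := prob_compl_eq_one_sub hBmeas
    have hPB1 : P B ≤ 1 := prob_le_one
    have hadd : ENNReal.ofReal u + ENNReal.ofReal (1 - u) = 1 := by
      rw [← ENNReal.ofReal_add hu.le h1u]
      norm_num
    have hle : ENNReal.ofReal u ≤ 1 - ENNReal.ofReal (1 - u) := by
      rw [← hadd]
      simp [ENNReal.add_sub_cancel_right (ENNReal.ofReal_ne_top)]
    calc ENNReal.ofReal u ≤ 1 - ENNReal.ofReal (1 - u) := hle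
      _ ≤ 1 - P Bᶜ := tsub_le_tsub_left hBcbound 1
      _ = 1 - (1 - P B) := by rw [hcompl]
      _ = P B := ENNReal.sub_sub_cancel ENNReal.one_ne_top hPB1
end
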